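/- The vector w ∈ ℚ^S defined by w_{C_a} = φ(p^{min(a,n−a)}) (φ = Euler's totient), w_{E_a} = φ(p^{min(a,n−a)})/2 and w_{F_a} = φ(p^{min(a,n−a)})/3 satisfies A'·w = 0; that is, the vector of multiplicities of the components of the special fibre of the minimal regular model of X₀(pⁿ) (n even) lies in the kernel of its intersection matrix. -/

import Mathlib

open Finset

/-- Index type for the components of the special fibre of the minimal regular model of
`X₀(pⁿ)` with `n` even: Igusa components `C a` and extra components `E a`, `F a`. -/
inductive Idx2 where
  | C : ℕ → Idx2
  | E : ℕ → Idx2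
  | F : ℕ → Idx2
deriving DecidableEq

/-- The intersection matrix `A'` of the special fibre at `p` of the minimal regular model of
`X₀(pⁿ)` for `n` even, obtained from the Edixhoven model by three blow-downs. -/
def matA' (p n : ℕ) : Idx2 → Idx2 → ℚ := fun Γ Γ' =>
  let ξ1 : ℚ := if p % 4 = 1 then 0 else 1
  let ξ3 : ℚ := if p % 3 = 1 then 0 else 1
  let k : ℚ := ((p : ℚ) - 1) / 12 - ξ1 / 2 - ξ3 / 3
  let s : ℕ → ℤ := fun a => (n : ℤ) - 2 * a
  let A0 : ℕ → ℕ → ℚ := fun a a' =>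
    if a = a' then
      if a = 0 ∨ a = n then -(p : ℚ) ^ (n - 1) * ((p : ℚ) - 1) / 12 - ξ1 / 2 - ξ3 / 3
      else -(p : ℚ) ^ (s a).natAbs / 6 - 1 / 2 - 1 / 3
    else
      if 0 < s a * s a' then
        k * (p : ℚ) ^ min (s a).natAbs (s a').natAbs
          + ξ1 * ((p : ℚ) ^ min (s a).natAbs (s a').natAbs - 1) / 2
          + ξ3 * ((p : ℚ) ^ min (s a).natAbs (s a').natAbs - 1) / 3
      else k
  match Γ, Γ' with
  | Idx2.C a, Idx2.C a' =>
      A0 a a' + 6 * k ^ 2 + (6 * k + 2) * ξ1 + (4 * k + 1) * ξ3 + 2 * ξ1 * ξ3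
  | Idx2.C a, Idx2.E a' => if a = a' then 1 else 0
  | Idx2.E a', Idx2.C a => if a = a' then 1 else 0
  | Idx2.C a, Idx2.F a' => if a = a' then 1 else 0
  | Idx2.F a', Idx2.C a => if a = a' then 1 else 0
  | Idx2.E a, Idx2.E a' => if a = a' then -2 else 0
  | Idx2.F a, Idx2.F a' => if a = a' then -3 else 0
  | Idx2.E _, Idx2.F _ => 0
  | Idx2.F _, Idx2.E _ => 0

/-- The index set of the components of the special fibre of the minimal regular model of
`X₀(pⁿ)`, `n` even: `C a` for `a ∈ {0,…,n}∖{n/2}`, `E a` for `a ∈ {1,…,n−1}∖{n/2}` if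
`p ≡ 1 (mod 4)`, and `F a` for `a ∈ {1,…,n−1}∖{n/2}` if `p ≡ 1 (mod 3)`. -/
def Sset2 (p n : ℕ) : Finset Idx2 :=
  ((Finset.range (n + 1)).erase (n / 2)).image Idx2.C
    ∪ (if p % 4 = 1 then ((Finset.Icc 1 (n - 1)).erase (n / 2)).image Idx2.E else ∅)
    ∪ (if p % 3 = 1 then ((Finset.Icc 1 (n - 1)).erase (n / 2)).image Idx2.F else ∅)

/-- The vector of multiplicities of the components of the special fibre. -/
def wvec2 (p n : ℕ) : Idx2 → ℚ
  | Idx2.C a => (Nat.totient (p ^ min a (n - a)) : ℚ)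
  | Idx2.E a => (Nat.totient (p ^ min a (n - a)) : ℚ) / 2
  | Idx2.F a => (Nat.totient (p ^ min a (n - a)) : ℚ) / 3

/-!
Write `n = 2m` and `b = min a (n - a)`. The components `C a` and `C (n - a)` both have
multiplicity `φ(p^b)`, so a row of `A' w` is a sum over `i < m` of pairs of entries weighted
by `φ(p^i)`. Off the diagonal, `A'(C a, C a')` is `κ + K` (`kappa`, the paper's `k`, and
`blowdownShift`, the constant added to every `C`-`C` entry) plus `(p - 1)/12 · (p^μ - 1)` when
`a, a'` lie on the same side of `m`, and `∑ φ(p^i) p^(2(m - max b i))` telescopes. The diagonal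
entry and the `E`, `F` entries cancel the leading term of that sum, leaving
`p^(m-1) (2(κ + K) - (p² - 1)/12)`, which vanishes because `κ + K = (p² - 1)/24` whenever
`ξ(-1), ξ(-3) ∈ {0, 1}`. The `E` and `F` rows are immediate.
-/

def xi (p q : ℕ) : ℚ := if p % q = 1 then 0 else 1

def kappa (p : ℕ) : ℚ := ((p : ℚ) - 1) / 12 - xi p 4 / 2 - xi p 3 / 3

def blowdownShift (p : ℕ) : ℚ :=
  6 * kappa p ^ 2 + (6 * kappa p + 2) * xi p 4 + (4 * kappa p + 1) * xi p 3
    + 2 * xi p 4 * xi p 3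

lemma kappa_eq (p : ℕ) : kappa p = ((p : ℚ) - 1) / 12 - xi p 4 / 2 - xi p 3 / 3 := rfl

lemma ite_eq_one_sub_xi_mul (p q : ℕ) (x : ℚ) :
    (if p % q = 1 then x else 0) = (1 - xi p q) * x := by
  unfold xi; split_ifs <;> ring

lemma kappa_add_blowdownShift (p : ℕ) :
    kappa p + blowdownShift p = ((p : ℚ) ^ 2 - 1) / 24 := by
  unfold blowdownShift kappa xi; split_ifs <;> ring

lemma sum_range_totient_prime_pow {p : ℕ} (hp : p.Prime) (k : ℕ) :
    ∑ i ∈ range (k + 1), ((p ^ i).totient : ℚ) = (p : ℚ) ^ k := by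
  have h := Nat.sum_totient (p ^ k)
  rw [Nat.divisors_prime_pow hp, sum_map] at h
  exact_mod_cast h

lemma totient_prime_pow_succ_cast {p : ℕ} (hp : p.Prime) (k : ℕ) :
    ((p ^ (k + 1)).totient : ℚ) = (p : ℚ) ^ k * (p - 1) := by
  rw [Nat.totient_prime_pow_succ hp, Nat.cast_mul, Nat.cast_sub hp.one_le, Nat.cast_pow,
    Nat.cast_one]

lemma sum_pow_mul_totient_prime_pow {p : ℕ} (hp : p.Prime) (b L : ℕ) :
    ∑ i ∈ range (b + 1 + L), (p : ℚ) ^ (2 * (b + 1 + L - max b i)) * ((p ^ i).totient : ℚ) =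
      (p : ℚ) ^ (b + 2 + 2 * L) + (p : ℚ) ^ (b + 1 + 2 * L) - (p : ℚ) ^ (b + 1 + L) := by
  induction L with
  | zero =>
    rw [sum_congr rfl fun i hi => by rw [show 2 * (b + 1 + 0 - max b i) = 2 by
      rw [mem_range] at hi; omega], ← mul_sum, sum_range_totient_prime_pow hp]
    ring
  | succ L ih =>
    have hshift : ∀ i ∈ range (b + 1 + L), (p : ℚ) ^ (2 * (b + 1 + L + 1 - max b i)) *
        ((p ^ i).totient : ℚ) = (p : ℚ) ^ 2 * ((p : ℚ) ^ (2 * (b + 1 + L - max b i)) *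
        ((p ^ i).totient : ℚ)) := by
      intro i hi
      rw [mem_range] at hi
      rw [← mul_assoc, ← pow_add]
      congr 2
      omega
    rw [show b + 1 + (L + 1) = b + 1 + L + 1 by ring, sum_range_succ, sum_congr rfl hshift,
      ← mul_sum, ih, show 2 * (b + 1 + L + 1 - max b (b + 1 + L)) = 2 by omega,
      show b + 1 + L = b + L + 1 by ring, totient_prime_pow_succ_cast hp]
    ring

lemma sum_erase_range_two_mul {M : Type*} [AddCommMonoid M] (m : ℕ) (f : ℕ → M) :
    ∑ a ∈ (range (2 * m + 1)).erase m, f a = ∑ i ∈ range m, (f i + f (2 * m - i)) := by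
  have hsplit : (range (2 * m + 1)).erase m = range m ∪ (range m).image (2 * m - ·) := by
    ext a
    simp only [mem_erase, mem_range, mem_union, mem_image]
    constructor
    · rintro ⟨ham, ha⟩
      exact (lt_or_gt_of_ne ham).imp_right fun h => ⟨2 * m - a, by omega, by omega⟩
    · rintro (h | ⟨i, hi, rfl⟩) <;> omega
  rw [hsplit, sum_union, sum_image, sum_add_distrib]
  · intro i hi j hj h
    simp only [coe_range, Set.mem_Iio] at hi hj h
    omega
  · simp only [disjoint_left, mem_range, mem_image]
    rintro a ha ⟨i, hi, rfl⟩
    omega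

lemma mem_Sset2_C {p n a : ℕ} :
    Idx2.C a ∈ Sset2 p n ↔ a ∈ (range (n + 1)).erase (n / 2) := by
  unfold Sset2; split_ifs <;> simp

lemma mem_Sset2_E {p n a : ℕ} :
    Idx2.E a ∈ Sset2 p n ↔ p % 4 = 1 ∧ a ∈ (Icc 1 (n - 1)).erase (n / 2) := by
  unfold Sset2; split_ifs <;> simp [*]

lemma mem_Sset2_F {p n a : ℕ} :
    Idx2.F a ∈ Sset2 p n ↔ p % 3 = 1 ∧ a ∈ (Icc 1 (n - 1)).erase (n / 2) := by
  unfold Sset2; split_ifs <;> simp [*]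

lemma sum_Sset2 {M : Type*} [AddCommMonoid M] (p n : ℕ) (f : Idx2 → M) :
    ∑ Γ ∈ Sset2 p n, f Γ = ∑ a ∈ (range (n + 1)).erase (n / 2), f (Idx2.C a)
      + (if p % 4 = 1 then ∑ a ∈ (Icc 1 (n - 1)).erase (n / 2), f (Idx2.E a) else 0)
      + (if p % 3 = 1 then ∑ a ∈ (Icc 1 (n - 1)).erase (n / 2), f (Idx2.F a) else 0) := by
  unfold Sset2
  rw [sum_union (by split_ifs <;> grind [disjoint_left]),
    sum_union (by split_ifs <;> grind [disjoint_left]), sum_image fun _ _ _ _ => Idx2.C.inj]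
  split_ifs <;> simp [sum_image]

lemma matA'_C_C_of_ne_of_pos {p n a a' : ℕ} (h : a ≠ a')
    (hs : 0 < ((n : ℤ) - 2 * a) * ((n : ℤ) - 2 * a')) :
    matA' p n (Idx2.C a) (Idx2.C a') =
      ((p : ℚ) - 1) / 12
          * ((p : ℚ) ^ min ((n : ℤ) - 2 * a).natAbs ((n : ℤ) - 2 * a').natAbs - 1)
        + kappa p + blowdownShift p := by
  simp only [matA', if_neg h, if_pos hs, kappa, blowdownShift, xi]
  ring

lemma matA'_C_C_of_ne_of_nonpos {p n a a' : ℕ} (h : a ≠ a')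
    (hs : ¬0 < ((n : ℤ) - 2 * a) * ((n : ℤ) - 2 * a')) :
    matA' p n (Idx2.C a) (Idx2.C a') = kappa p + blowdownShift p := by
  simp only [matA', if_neg h, if_neg hs, kappa, blowdownShift, xi]
  ring

lemma matA'_C_C_self_of_ne_zero_of_ne {p n a : ℕ} (h0 : a ≠ 0) (hn : a ≠ n) :
    matA' p n (Idx2.C a) (Idx2.C a) =
      -(p : ℚ) ^ ((n : ℤ) - 2 * a).natAbs / 6 - 5 / 6 + blowdownShift p := by
  simp only [matA', if_true, if_neg (not_or.2 ⟨h0, hn⟩), kappa, blowdownShift, xi]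
  ring

lemma matA'_C_C_self_of_eq_zero_or_eq {p n a : ℕ} (h : a = 0 ∨ a = n) :
    matA' p n (Idx2.C a) (Idx2.C a) =
      -(p : ℚ) ^ (n - 1) * ((p : ℚ) - 1) / 12 - xi p 4 / 2 - xi p 3 / 3 + blowdownShift p := by
  simp only [matA', if_true, if_pos h, kappa, blowdownShift, xi]
  ring

lemma matA'_C_add_matA'_C_reflect {p m a i : ℕ} (ha : a ∈ (range (2 * m + 1)).erase m)
    (hi : i < m) :
    matA' p (2 * m) (Idx2.C a) (Idx2.C i) + matA' p (2 * m) (Idx2.C a) (Idx2.C (2 * m - i)) =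
      ((p : ℚ) - 1) / 12 * ((p : ℚ) ^ (2 * (m - max (min a (2 * m - a)) i)) - 1)
        + 2 * (kappa p + blowdownShift p)
        + if i = min a (2 * m - a) then matA' p (2 * m) (Idx2.C a) (Idx2.C a)
            - (((p : ℚ) - 1) / 12 * ((p : ℚ) ^ (2 * (m - i)) - 1) + kappa p + blowdownShift p)
          else 0 := by
  rw [mem_erase, mem_range] at ha
  by_cases hdiag : i = min a (2 * m - a)
  · rw [if_pos hdiag, max_eq_right hdiag.ge]
    rcases lt_or_gt_of_ne ha.1 with h | h
    · obtain rfl : i = a := by omega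
      rw [matA'_C_C_of_ne_of_nonpos (a' := 2 * m - i) (by omega) (by rw [mul_pos_iff]; omega)]
      ring
    · rw [matA'_C_C_of_ne_of_nonpos (a' := i) (by omega) (by rw [mul_pos_iff]; omega),
        show 2 * m - i = a by omega]
      ring
  · rw [if_neg hdiag]
    rcases lt_or_gt_of_ne ha.1 with h | h
    · rw [matA'_C_C_of_ne_of_pos (a' := i) (by omega) (by rw [mul_pos_iff]; omega),
        matA'_C_C_of_ne_of_nonpos (a' := 2 * m - i) (by omega) (by rw [mul_pos_iff]; omega),
        show min (((2 * m : ℕ) : ℤ) - 2 * a).natAbs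
            (((2 * m : ℕ) : ℤ) - 2 * i).natAbs = 2 * (m - max (min a (2 * m - a)) i) by omega]
      ring
    · rw [matA'_C_C_of_ne_of_nonpos (a' := i) (by omega) (by rw [mul_pos_iff]; omega),
        matA'_C_C_of_ne_of_pos (a' := 2 * m - i) (by omega) (by rw [mul_pos_iff]; omega),
        show min (((2 * m : ℕ) : ℤ) - 2 * a).natAbs
            (((2 * m : ℕ) : ℤ) - 2 * ↑(2 * m - i)).natAbs
          = 2 * (m - max (min a (2 * m - a)) i) by omega]
      ring

lemma sum_matA'_C_C_mul_wvec2_C {p m a b L : ℕ} (hp : p.Prime)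
    (ha : a ∈ (range (2 * m + 1)).erase m) (hb : min a (2 * m - a) = b) (hL : m = b + 1 + L) :
    ∑ a' ∈ (range (2 * m + 1)).erase m, matA' p (2 * m) (Idx2.C a) (Idx2.C a')
        * wvec2 p (2 * m) (Idx2.C a') =
      ((p : ℚ) - 1) / 12 * ((p : ℚ) ^ (b + 2 + 2 * L) + (p : ℚ) ^ (b + 1 + 2 * L)
          - (p : ℚ) ^ (b + 1 + L) - (p : ℚ) ^ (b + L))
        + 2 * (kappa p + blowdownShift p) * (p : ℚ) ^ (b + L)
        + (matA' p (2 * m) (Idx2.C a) (Idx2.C a)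
          - (((p : ℚ) - 1) / 12 * ((p : ℚ) ^ (2 * (L + 1)) - 1) + kappa p + blowdownShift p))
          * ((p ^ b).totient : ℚ) := by
  have hterm : ∀ i ∈ range m,
      matA' p (2 * m) (Idx2.C a) (Idx2.C i) * wvec2 p (2 * m) (Idx2.C i)
        + matA' p (2 * m) (Idx2.C a) (Idx2.C (2 * m - i)) * wvec2 p (2 * m) (Idx2.C (2 * m - i))
      = ((p : ℚ) - 1) / 12 * ((p : ℚ) ^ (2 * (m - max b i)) * ((p ^ i).totient : ℚ))
        + (2 * (kappa p + blowdownShift p) - ((p : ℚ) - 1) / 12) * ((p ^ i).totient : ℚ)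
        + if i = b then (matA' p (2 * m) (Idx2.C a) (Idx2.C a)
            - (((p : ℚ) - 1) / 12 * ((p : ℚ) ^ (2 * (L + 1)) - 1) + kappa p + blowdownShift p))
            * ((p ^ b).totient : ℚ) else 0 := by
    intro i hi
    rw [mem_range] at hi
    rw [wvec2, wvec2, min_eq_left (by omega), show min (2 * m - i) (2 * m - (2 * m - i)) = i by
      omega, ← add_mul, matA'_C_add_matA'_C_reflect ha hi, hb]
    split_ifs with hib
    · subst hib
      rw [show 2 * (m - i) = 2 * (L + 1) by omega]
      ring
    · ring
  rw [sum_erase_range_two_mul, sum_congr rfl hterm, sum_add_distrib, sum_add_distrib,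
    sum_ite_eq', if_pos (mem_range.2 (by omega)), ← mul_sum, ← mul_sum, hL,
    sum_pow_mul_totient_prime_pow hp, show b + 1 + L = b + L + 1 by ring,
    sum_range_totient_prime_pow hp]
  ring

lemma sum_matA'_E_mul_wvec2_eq_zero {p n a : ℕ} (h4 : p % 4 = 1)
    (ha : a ∈ (Icc 1 (n - 1)).erase (n / 2)) :
    ∑ Γ ∈ Sset2 p n, matA' p n (Idx2.E a) Γ * wvec2 p n Γ = 0 := by
  have haC : a ∈ (range (n + 1)).erase (n / 2) := by
    simp only [mem_erase, mem_Icc, mem_range] at ha ⊢; omega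
  rw [sum_Sset2]
  simp only [matA', wvec2, ite_mul, one_mul, zero_mul, sum_ite_eq', haC, if_true, h4, sum_ite_eq,
    ha, sum_const_zero, ite_self, add_zero]
  ring

lemma sum_matA'_F_mul_wvec2_eq_zero {p n a : ℕ} (h3 : p % 3 = 1)
    (ha : a ∈ (Icc 1 (n - 1)).erase (n / 2)) :
    ∑ Γ ∈ Sset2 p n, matA' p n (Idx2.F a) Γ * wvec2 p n Γ = 0 := by
  have haC : a ∈ (range (n + 1)).erase (n / 2) := by
    simp only [mem_erase, mem_Icc, mem_range] at ha ⊢; omega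
  rw [sum_Sset2]
  simp only [matA', wvec2, ite_mul, one_mul, zero_mul, sum_ite_eq', haC, if_true, h3, sum_ite_eq,
    ha, sum_const_zero, ite_self, add_zero]
  ring

lemma sum_matA'_C_mul_wvec2_eq_zero {p m a : ℕ} (hp : p.Prime)
    (ha : a ∈ (range (2 * m + 1)).erase m) :
    ∑ Γ ∈ Sset2 p (2 * m), matA' p (2 * m) (Idx2.C a) Γ * wvec2 p (2 * m) Γ = 0 := by
  obtain ⟨b, hb⟩ : ∃ b, min a (2 * m - a) = b := ⟨_, rfl⟩
  obtain ⟨ham, ha2m⟩ := mem_erase.1 ha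
  rw [mem_range] at ha2m
  obtain ⟨L, hL⟩ : ∃ L, m = b + 1 + L := ⟨m - b - 1, by omega⟩
  have hE : ∑ a' ∈ (Icc 1 (2 * m - 1)).erase m,
      matA' p (2 * m) (Idx2.C a) (Idx2.E a') * wvec2 p (2 * m) (Idx2.E a') =
        if a ∈ (Icc 1 (2 * m - 1)).erase m then ((p ^ b).totient : ℚ) / 2 else 0 := by
    simp [matA', wvec2, hb]
  have hF : ∑ a' ∈ (Icc 1 (2 * m - 1)).erase m,
      matA' p (2 * m) (Idx2.C a) (Idx2.F a') * wvec2 p (2 * m) (Idx2.F a') =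
        if a ∈ (Icc 1 (2 * m - 1)).erase m then ((p ^ b).totient : ℚ) / 3 else 0 := by
    simp [matA', wvec2, hb]
  rw [sum_Sset2, Nat.mul_div_cancel_left m two_pos, sum_matA'_C_C_mul_wvec2_C hp ha hb hL,
    hE, hF, ite_eq_one_sub_xi_mul, ite_eq_one_sub_xi_mul]
  have hI : a ∈ (Icc 1 (2 * m - 1)).erase m ↔ b ≠ 0 := by
    simp only [mem_erase, mem_Icc]; omega
  rcases b with _ | B
  · rw [if_neg (hI.not.2 (not_not.2 rfl)), if_neg (hI.not.2 (not_not.2 rfl)),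
      matA'_C_C_self_of_eq_zero_or_eq (by omega), show 2 * m - 1 = 2 * L + 1 by omega, pow_zero,
      Nat.totient_one, Nat.cast_one]
    linear_combination (2 * (p : ℚ) ^ L) * kappa_add_blowdownShift p - kappa_eq p
  · rw [if_pos (hI.2 B.succ_ne_zero), if_pos (hI.2 B.succ_ne_zero),
      matA'_C_C_self_of_ne_zero_of_ne (by omega) (by omega),
      show (((2 * m : ℕ) : ℤ) - 2 * a).natAbs = 2 * (L + 1) by omega,
      totient_prime_pow_succ_cast hp]
    linear_combination (2 * (p : ℚ) ^ (B + 1 + L)) * kappa_add_blowdownShift p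
      - ((p : ℚ) ^ B * (p - 1)) * kappa_eq p

theorem stmt_14_general (p n : ℕ) (hp : p.Prime) (hev : Even n) :
    ∀ Γ ∈ Sset2 p n, ∑ Γ' ∈ Sset2 p n, matA' p n Γ Γ' * wvec2 p n Γ' = 0 := by
  obtain ⟨m, rfl⟩ := hev
  rw [← two_mul]
  rintro (a | a | a) hΓ
  · rw [mem_Sset2_C, Nat.mul_div_cancel_left m two_pos] at hΓ
    exact sum_matA'_C_mul_wvec2_eq_zero hp hΓ
  · obtain ⟨h4, ha⟩ := mem_Sset2_E.1 hΓ
    exact sum_matA'_E_mul_wvec2_eq_zero h4 ha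
  · obtain ⟨h3, ha⟩ := mem_Sset2_F.1 hΓ
    exact sum_matA'_F_mul_wvec2_eq_zero h3 ha

theorem stmt_14 (p n : ℕ) (hp : p.Prime) (hp3 : 3 < p) (hn : 2 ≤ n) (hev : Even n) :
    ∀ Γ ∈ Sset2 p n, ∑ Γ' ∈ Sset2 p n, matA' p n Γ Γ' * wvec2 p n Γ' = 0 :=
  stmt_14_general p n hp hev
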